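/- For all reals a > 0 and b ≥ 0, the first-order Marcum Q-function satisfies Q₁(a,b) = exp(−(a²/2 + b²/2)) · Φ₃(1, 1; a²/2, a²b²/4). -/

import Mathlib

open MeasureTheory Real Finset

/-- Modified Bessel function of the first kind of nonnegative integer order. -/
noncomputable def besselI (n : ℕ) (x : ℝ) : ℝ :=
  ∑' k : ℕ, (x / 2) ^ (2 * k + n) / (k.factorial * (k + n).factorial)

/-- Generalized Marcum Q-function of positive integer order `m`. -/
noncomputable def marcumQ (m : ℕ) (a b : ℝ) : ℝ :=
  a ^ (-((m : ℤ) - 1)) *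
    ∫ x in Set.Ioi b, x ^ m * Real.exp (-(x ^ 2 + a ^ 2) / 2) * besselI (m - 1) (a * x)

/-- The confluent hypergeometric (Horn) function of two variables `Φ₃`. -/
noncomputable def Phi3 (b c x y : ℝ) : ℝ :=
  ∑' j : ℕ, ∑' n : ℕ,
    (ascPochhammer ℝ j).eval b /
      ((ascPochhammer ℝ (j + n)).eval c * (j.factorial : ℝ) * (n.factorial : ℝ)) *
      x ^ j * y ^ n

/-!
With `A = a² / 2` and `B = b² / 2`, expanding `I₀` termwise gives
`Q₁(a, b) = ∑ₖ e^{-A} Aᵏ / k! · ∫_b^∞ x e^{-x²/2} (x²/2)ᵏ / k! dx`, and the substitution `t = x² / 2`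
turns the `k`-th integral into `Γ(k + 1, B) / k! = e^{-B} ∑_{n ≤ k} Bⁿ / n!`.
Since `(1)ⱼ = j!`, the terms of `Φ₃(1, 1; A, AB)` are `A^{j+n} Bⁿ / ((j + n)! n!)`; grouping them
along the antidiagonals `j + n = k` gives the same series.
-/

open Filter Topology

/-- `Γ(k + 1, t) / k!`, the regularized upper incomplete gamma function at integer order. -/
noncomputable def regUpperGamma (k : ℕ) (t : ℝ) : ℝ :=
  exp (-t) * ∑ n ∈ range (k + 1), t ^ n / n.factorial

lemma regUpperGamma_succ (k : ℕ) :
    regUpperGamma (k + 1) =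
      fun t => regUpperGamma k t + exp (-t) * (t ^ (k + 1) / (k + 1).factorial) := by
  funext t
  simp only [regUpperGamma, sum_range_succ _ (k + 1), mul_add]

lemma hasDerivAt_regUpperGamma (k : ℕ) (t : ℝ) :
    HasDerivAt (regUpperGamma k) (-(exp (-t) * (t ^ k / k.factorial))) t := by
  induction k with
  | zero =>
    have h0 : regUpperGamma 0 = fun t => exp (-t) := by funext t; simp [regUpperGamma]
    simpa [h0] using (hasDerivAt_neg t).exp
  | succ k ih =>
    rw [regUpperGamma_succ]
    have hterm : HasDerivAt (fun t => exp (-t) * (t ^ (k + 1) / (k + 1).factorial))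
        (exp (-t) * (t ^ k / k.factorial) - exp (-t) * (t ^ (k + 1) / (k + 1).factorial)) t := by
      have hpow : HasDerivAt (fun t : ℝ => t ^ (k + 1) / (k + 1).factorial)
          (t ^ k / k.factorial) t := by
        refine ((hasDerivAt_pow (k + 1) t).div_const ((k + 1).factorial : ℝ)).congr_deriv ?_
        push_cast [Nat.factorial_succ]
        field_simp
      exact ((hasDerivAt_neg t).exp.mul hpow).congr_deriv (by ring)
    exact (ih.add hterm).congr_deriv (by ring)

lemma tendsto_regUpperGamma_atTop (k : ℕ) : Tendsto (regUpperGamma k) atTop (𝓝 0) := by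
  have h := tendsto_finsetSum (range (k + 1)) fun n _ =>
    (tendsto_pow_mul_exp_neg_atTop_nhds_zero n).div_const (n.factorial : ℝ)
  simp only [zero_div, sum_const_zero] at h
  refine h.congr fun t => ?_
  rw [regUpperGamma, mul_sum]
  congr 1 with n
  ring

lemma regUpperGamma_nonneg (k : ℕ) {t : ℝ} (ht : 0 ≤ t) : 0 ≤ regUpperGamma k t := by
  unfold regUpperGamma
  positivity

lemma regUpperGamma_le_one (k : ℕ) {t : ℝ} (ht : 0 ≤ t) : regUpperGamma k t ≤ 1 :=
  calc regUpperGamma k t ≤ exp (-t) * exp t :=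
        mul_le_mul_of_nonneg_left (sum_le_exp_of_nonneg ht _) (exp_pos _).le
    _ = 1 := by rw [← exp_add, neg_add_cancel, exp_zero]

section GaussianMoments

variable (k : ℕ) {b : ℝ}

lemma hasDerivAt_neg_regUpperGamma_sq_half (x : ℝ) :
    HasDerivAt (fun x => -regUpperGamma k (x ^ 2 / 2))
      (x * exp (-(x ^ 2 / 2)) * ((x ^ 2 / 2) ^ k / k.factorial)) x := by
  have hsq : HasDerivAt (fun x : ℝ => x ^ 2 / 2) x x := by
    simpa using (hasDerivAt_pow 2 x).div_const 2
  refine ((hasDerivAt_regUpperGamma k (x ^ 2 / 2)).comp x hsq).neg.congr_deriv ?_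
  ring

lemma tendsto_neg_regUpperGamma_sq_half :
    Tendsto (fun x => -regUpperGamma k (x ^ 2 / 2)) atTop (𝓝 0) := by
  simpa using ((tendsto_regUpperGamma_atTop k).comp
    ((tendsto_pow_atTop two_ne_zero).atTop_div_const two_pos)).neg

lemma mul_exp_neg_sq_half_pow_nonneg {x : ℝ} (hx : 0 ≤ x) :
    0 ≤ x * exp (-(x ^ 2 / 2)) * ((x ^ 2 / 2) ^ k / k.factorial) := by
  positivity

lemma integrableOn_mul_exp_neg_sq_half_pow (hb : 0 ≤ b) :
    IntegrableOn (fun x => x * exp (-(x ^ 2 / 2)) * ((x ^ 2 / 2) ^ k / k.factorial))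
      (Set.Ioi b) :=
  integrableOn_Ioi_deriv_of_nonneg' (fun x _ => hasDerivAt_neg_regUpperGamma_sq_half k x)
    (fun _ hx => mul_exp_neg_sq_half_pow_nonneg k (hb.trans hx.out.le))
    (tendsto_neg_regUpperGamma_sq_half k)

lemma integral_mul_exp_neg_sq_half_pow (hb : 0 ≤ b) :
    ∫ x in Set.Ioi b, x * exp (-(x ^ 2 / 2)) * ((x ^ 2 / 2) ^ k / k.factorial) =
      regUpperGamma k (b ^ 2 / 2) := by
  rw [integral_Ioi_of_hasDerivAt_of_nonneg' (fun x _ => hasDerivAt_neg_regUpperGamma_sq_half k x)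
    (fun _ hx => mul_exp_neg_sq_half_pow_nonneg k (hb.trans hx.out.le))
    (tendsto_neg_regUpperGamma_sq_half k)]
  rw [zero_sub, neg_neg]

end GaussianMoments

theorem integral_tsum_of_nonneg {α ι : Type*} [MeasurableSpace α] [Countable ι] {μ : Measure α}
    {F : ι → α → ℝ} (hF : ∀ i, 0 ≤ᵐ[μ] F i) (hF_int : ∀ i, Integrable (F i) μ)
    (hF_sum : Summable fun i => ∫ a, F i a ∂μ) :
    ∫ a, ∑' i, F i a ∂μ = ∑' i, ∫ a, F i a ∂μ := by
  refine (integral_tsum_of_summable_integral_norm hF_int (hF_sum.congr fun i => ?_)).symm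
  exact integral_congr_ae ((hF i).mono fun a ha => (norm_of_nonneg ha).symm)

lemma mul_exp_mul_besselI_zero_eq_tsum (a x : ℝ) :
    x * exp (-(x ^ 2 + a ^ 2) / 2) * besselI 0 (a * x) =
      ∑' k : ℕ, exp (-(a ^ 2 / 2)) * ((a ^ 2 / 2) ^ k / k.factorial) *
        (x * exp (-(x ^ 2 / 2)) * ((x ^ 2 / 2) ^ k / k.factorial)) := by
  rw [besselI, ← tsum_mul_left]
  congr 1 with k
  rw [add_zero, add_zero, pow_mul, show (a * x / 2) ^ 2 = a ^ 2 / 2 * (x ^ 2 / 2) by ring,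
    mul_pow, show -(x ^ 2 + a ^ 2) / 2 = -(a ^ 2 / 2) + -(x ^ 2 / 2) by ring, exp_add]
  ring

theorem marcumQ_one_eq_tsum (a : ℝ) {b : ℝ} (hb : 0 ≤ b) :
    marcumQ 1 a b = ∑' k : ℕ, exp (-(a ^ 2 / 2)) * ((a ^ 2 / 2) ^ k / k.factorial) *
      regUpperGamma k (b ^ 2 / 2) := by
  set c : ℕ → ℝ := fun k => exp (-(a ^ 2 / 2)) * ((a ^ 2 / 2) ^ k / k.factorial)
  have hc : ∀ k, 0 ≤ c k := fun k => by positivity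
  have hval : ∀ k, ∫ x in Set.Ioi b,
      c k * (x * exp (-(x ^ 2 / 2)) * ((x ^ 2 / 2) ^ k / k.factorial)) =
        c k * regUpperGamma k (b ^ 2 / 2) := fun k => by
    rw [integral_const_mul, integral_mul_exp_neg_sq_half_pow k hb]
  have hsum : Summable fun k => c k * regUpperGamma k (b ^ 2 / 2) :=
    ((summable_pow_div_factorial (a ^ 2 / 2)).mul_left _).of_nonneg_of_le
      (fun k => mul_nonneg (hc k) (regUpperGamma_nonneg k (by positivity)))
      (fun k => mul_le_of_le_one_right (hc k) (regUpperGamma_le_one k (by positivity)))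
  simp only [marcumQ, Nat.cast_one, sub_self, neg_zero, zpow_zero, one_mul, pow_one,
    Nat.sub_self, mul_exp_mul_besselI_zero_eq_tsum]
  rw [integral_tsum_of_nonneg
    (fun k => ae_restrict_of_forall_mem measurableSet_Ioi fun x hx =>
      mul_nonneg (hc k) (mul_exp_neg_sq_half_pow_nonneg k (hb.trans hx.out.le)))
    (fun k => (integrableOn_mul_exp_neg_sq_half_pow k hb).const_mul (c k))
    (by simpa only [hval] using hsum)]
  exact tsum_congr hval

theorem Summable.tsum_eq_tsum_sum_antidiagonal {A α : Type*} [AddCommMonoid A]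
    [HasAntidiagonal A] [AddCommMonoid α] [TopologicalSpace α] [T3Space α] [ContinuousAdd α]
    {f : A × A → α} (hf : Summable f) : ∑' p, f p = ∑' n, ∑ p ∈ antidiagonal n, f p := by
  rw [← HasAntidiagonal.sigmaAntidiagonalEquivProd.tsum_eq]
  refine ((HasAntidiagonal.sigmaAntidiagonalEquivProd.summable_iff.mpr hf).tsum_sigma'
      fun n => (hasSum_fintype _).summable).trans (tsum_congr fun n => ?_)
  rw [tsum_fintype]
  exact sum_finset_coe f _

lemma sum_antidiagonal_snd_eq_sum_range {M : Type*} [AddCommMonoid M] (g : ℕ → M) (k : ℕ) :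
    ∑ p ∈ antidiagonal k, g p.2 = ∑ n ∈ range (k + 1), g n :=
  (Nat.sum_antidiagonal_swap (f := fun p => g p.1)).trans
    (Nat.sum_antidiagonal_eq_sum_range_succ_mk _ k)

theorem Phi3_one_one_mul {A B : ℝ} (hA : 0 ≤ A) (hB : 0 ≤ B) :
    Phi3 1 1 A (A * B) =
      ∑' k : ℕ, A ^ k / k.factorial * ∑ n ∈ range (k + 1), B ^ n / n.factorial := by
  set f : ℕ × ℕ → ℝ := fun p =>
    A ^ (p.1 + p.2) / (p.1 + p.2).factorial * (B ^ p.2 / p.2.factorial)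
  have hterm : ∀ j n : ℕ, (ascPochhammer ℝ j).eval 1 /
      ((ascPochhammer ℝ (j + n)).eval 1 * (j.factorial : ℝ) * (n.factorial : ℝ)) *
        A ^ j * (A * B) ^ n = f (j, n) := by
    intro j n
    simp only [f, ascPochhammer_eval_one, pow_add, mul_pow]
    field_simp
  have hf : Summable f := by
    refine ((summable_pow_div_factorial A).mul_of_nonneg (summable_pow_div_factorial (A * B))
      (fun j => by positivity) (fun n => by positivity)).of_nonneg_of_le
        (fun p => by positivity) fun ⟨j, n⟩ => ?_
    have hfac : (j.factorial : ℝ) ≤ (j + n).factorial := by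
      exact_mod_cast Nat.factorial_le (Nat.le_add_right j n)
    calc f (j, n) = A ^ j * (A * B) ^ n / ((j + n).factorial * n.factorial) := by
          simp only [f, pow_add, mul_pow]; ring
      _ ≤ A ^ j * (A * B) ^ n / (j.factorial * n.factorial) := by gcongr
      _ = A ^ j / j.factorial * ((A * B) ^ n / n.factorial) := by ring
  have hdiag : ∀ k, ∑ p ∈ antidiagonal k, f p =
      A ^ k / k.factorial * ∑ n ∈ range (k + 1), B ^ n / n.factorial := fun k => by
    rw [← sum_antidiagonal_snd_eq_sum_range (fun n => B ^ n / n.factorial), mul_sum]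
    exact sum_congr rfl fun p hp => by dsimp only [f]; rw [mem_antidiagonal.mp hp]
  simp only [Phi3, hterm]
  rw [← hf.tsum_prod' fun j => hf.prod_factor j, hf.tsum_eq_tsum_sum_antidiagonal]
  exact tsum_congr hdiag

theorem marcumQ_one_eq_Phi3_general (a b : ℝ) (hb : 0 ≤ b) :
    marcumQ 1 a b =
      Real.exp (-(a ^ 2 / 2 + b ^ 2 / 2)) * Phi3 1 1 (a ^ 2 / 2) (a ^ 2 * b ^ 2 / 4) := by
  rw [marcumQ_one_eq_tsum a hb, show a ^ 2 * b ^ 2 / 4 = a ^ 2 / 2 * (b ^ 2 / 2) by ring,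
    Phi3_one_one_mul (by positivity) (by positivity), ← tsum_mul_left]
  congr 1 with k
  rw [regUpperGamma, neg_add, exp_add]
  ring

theorem marcumQ_one_eq_Phi3 (a b : ℝ) (ha : 0 < a) (hb : 0 ≤ b) :
    marcumQ 1 a b =
      Real.exp (-(a ^ 2 / 2 + b ^ 2 / 2)) * Phi3 1 1 (a ^ 2 / 2) (a ^ 2 * b ^ 2 / 4) :=
  marcumQ_one_eq_Phi3_general a b hb
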